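/- arXiv:1808.05573 — 4 statements merged into one kernel-verified Lean document; each statement's English description precedes it below -/
import Mathlib

section
/- Let g, n, b be natural numbers with 2g + n + b ≥ 3 (equivalently, χ := 2 − 2g − n − b is a negative integer, and then 4g + n + b − 2 = 2 − (2χ + b + n) ≥ 1). Then there exists a unique real number r > 0 satisfying 3·(4g + n + b − 2)·α(r) + 2·n·β(r) + 2·b·γ(r) = 2π. -/
/-!
Each of `α`, `β`, `γ` has the form `r ↦ arcsin (1 / (c cosh r))` with `c ≥ 1`, which is continuous,
strictly decreasing on `[0, ∞)` and tends to `0`. The left-hand side is a combination of them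
with positive weight on `α` and nonnegative weights on `β`, `γ`, so it decreases strictly from
`(4g + 2n + 2b - 2)π ≥ 4π` at `r = 0` to `0`, and takes the value `2π` exactly once.
-/

open Real Filter Set Topology

theorem Real.tendsto_cosh_atTop : Tendsto cosh atTop atTop := by
  refine tendsto_atTop_mono (fun x => ?_) (tendsto_exp_atTop.atTop_div_const two_pos)
  rw [cosh_eq]
  gcongr
  exact le_add_of_nonneg_right (exp_pos _).le

theorem Real.one_le_sqrt_two : (1 : ℝ) ≤ √2 := by
  rw [one_le_sqrt]; norm_num

theorem Real.arcsin_one_half : arcsin (1 / 2) = π / 6 := by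
  rw [← sin_pi_div_six, arcsin_sin] <;> linarith [pi_pos]

theorem Real.arcsin_one_div_sqrt_two : arcsin (1 / √2) = π / 4 := by
  rw [← sqrt_div_self', ← sin_pi_div_four, arcsin_sin] <;> linarith [pi_pos]

theorem StrictAntiOn.existsUnique_gt_eq_of_tendsto {α δ : Type*}
    [ConditionallyCompleteLinearOrder α] [TopologicalSpace α] [OrderTopology α] [DenselyOrdered α]
    [LinearOrder δ] [TopologicalSpace δ] [OrderClosedTopology δ]
    {f : α → δ} {a : α} {L y : δ} (hanti : StrictAntiOn f (Ici a))
    (hf : ContinuousOn f (Ici a)) (hlim : Tendsto f atTop (𝓝 L)) (hL : L < y) (hy : y < f a) :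
    ∃! r, a < r ∧ f r = y := by
  have : Nonempty α := ⟨a⟩
  obtain ⟨R, haR, hR⟩ := ((eventually_ge_atTop a).and (hlim.eventually_lt_const hL)).exists
  obtain ⟨r, ⟨har, hrR⟩, hr⟩ := intermediate_value_Ioo' haR (hf.mono Icc_subset_Ici_self) ⟨hR, hy⟩
  exact ⟨r, ⟨har, hr⟩, fun s ⟨has, hs⟩ =>
    hanti.injOn (mem_Ici.2 has.le) (mem_Ici.2 har.le) (hs.trans hr.symm)⟩

section ArcsinInvCosh

variable {c : ℝ}

theorem strictAntiOn_arcsin_one_div_mul_cosh (hc : 1 ≤ c) :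
    StrictAntiOn (fun r => arcsin (1 / (c * cosh r))) (Ici 0) := by
  intro x hx y hy hxy
  have hcx : 1 ≤ c * cosh x := one_le_mul_of_one_le_of_one_le hc (one_le_cosh x)
  have hcy : 1 ≤ c * cosh y := one_le_mul_of_one_le_of_one_le hc (one_le_cosh y)
  have hmem : ∀ t, 1 ≤ t → 1 / t ∈ Icc (-1 : ℝ) 1 := fun t ht =>
    ⟨by have : 0 ≤ 1 / t := by positivity
        linarith, div_le_one_of_le₀ ht (by linarith)⟩
  refine strictMonoOn_arcsin (hmem _ hcy) (hmem _ hcx) (one_div_lt_one_div_of_lt (by linarith) ?_)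
  exact mul_lt_mul_of_pos_left (cosh_strictMonoOn hx hy hxy) (by linarith)

theorem continuous_arcsin_one_div_mul_cosh (hc : 0 < c) :
    Continuous fun r => arcsin (1 / (c * cosh r)) :=
  continuous_arcsin.comp <| continuous_const.div (continuous_const.mul continuous_cosh)
    fun r => (mul_pos hc (cosh_pos r)).ne'

theorem tendsto_arcsin_one_div_mul_cosh_atTop (hc : 0 < c) :
    Tendsto (fun r => arcsin (1 / (c * cosh r))) atTop (𝓝 0) := by
  have h := (tendsto_cosh_atTop.const_mul_atTop hc).inv_tendsto_atTop
  simpa [Function.comp_def] using (continuous_arcsin.tendsto 0).comp h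

end ArcsinInvCosh

/-- The left-hand side of the equation is `angleSum (4g + n + b - 2) n b`. -/
noncomputable def angleSum (A N B r : ℝ) : ℝ :=
  3 * A * (2 * arcsin (1 / (2 * cosh r))) + 2 * N * arcsin (1 / cosh r)
    + 2 * B * (2 * arcsin (1 / (√2 * cosh r)))

section AngleSum

variable {A N B : ℝ}

theorem strictAntiOn_angleSum (hA : 0 < A) (hN : 0 ≤ N) (hB : 0 ≤ B) :
    StrictAntiOn (angleSum A N B) (Ici 0) := by
  intro x hx y hy hxy
  have hα := strictAntiOn_arcsin_one_div_mul_cosh (by norm_num : (1 : ℝ) ≤ 2) hx hy hxy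
  have hβ := (strictAntiOn_arcsin_one_div_mul_cosh le_rfl hx hy hxy).le
  have hγ := (strictAntiOn_arcsin_one_div_mul_cosh one_le_sqrt_two hx hy hxy).le
  simp only [one_mul] at hα hβ hγ
  unfold angleSum
  linarith [mul_lt_mul_of_pos_left hα (by positivity : 0 < 3 * A * 2),
    mul_le_mul_of_nonneg_left hβ (by positivity : 0 ≤ 2 * N),
    mul_le_mul_of_nonneg_left hγ (by positivity : 0 ≤ 2 * B * 2)]

theorem continuous_angleSum : Continuous (angleSum A N B) := by
  have hβ := continuous_arcsin_one_div_mul_cosh one_pos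
  simp only [one_mul] at hβ
  unfold angleSum
  have := continuous_arcsin_one_div_mul_cosh two_pos
  have := continuous_arcsin_one_div_mul_cosh (sqrt_pos.2 two_pos)
  fun_prop

theorem tendsto_angleSum_atTop : Tendsto (angleSum A N B) atTop (𝓝 0) := by
  have hα := tendsto_arcsin_one_div_mul_cosh_atTop two_pos
  have hβ := tendsto_arcsin_one_div_mul_cosh_atTop one_pos
  have hγ := tendsto_arcsin_one_div_mul_cosh_atTop (sqrt_pos.2 two_pos)
  simp only [one_mul] at hβ
  have := ((hα.const_mul 2).const_mul (3 * A)).add (hβ.const_mul (2 * N)) |>.add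
    ((hγ.const_mul 2).const_mul (2 * B))
  simp only [mul_zero, add_zero] at this
  exact this

theorem angleSum_zero : angleSum A N B 0 = (A + N + B) * π := by
  simp only [angleSum, cosh_zero, mul_one, div_one, arcsin_one, arcsin_one_half,
    arcsin_one_div_sqrt_two]
  ring

end AngleSum

/-- The equation defining the sharp injectivity radius bound `r_{χ,n,b}`:
for natural numbers `g, n, b` with `2g + n + b ≥ 3` there is a unique `r > 0` with
`3·(4g+n+b−2)·α(r) + 2n·β(r) + 2b·γ(r) = 2π`, where
`α(r) = 2·arcsin(1/(2cosh r))`, `β(r) = arcsin(1/cosh r)`,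
`γ(r) = 2·arcsin(1/(√2·cosh r))`. -/
theorem stmt_0 (g n b : ℕ) (h : 3 ≤ 2 * g + n + b) :
    ∃! r : ℝ, 0 < r ∧
      3 * ((4 * g + n + b : ℝ) - 2) * (2 * Real.arcsin (1 / (2 * Real.cosh r)))
        + 2 * (n : ℝ) * Real.arcsin (1 / Real.cosh r)
        + 2 * (b : ℝ) * (2 * Real.arcsin (1 / (Real.sqrt 2 * Real.cosh r)))
      = 2 * Real.pi := by
  have h' : (3 : ℝ) ≤ 2 * g + n + b := by exact_mod_cast h
  have hA : 0 < (4 * g + n + b : ℝ) - 2 := by linarith [(g.cast_nonneg : (0 : ℝ) ≤ g)]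
  refine StrictAntiOn.existsUnique_gt_eq_of_tendsto (f := angleSum ((4 * g + n + b : ℝ) - 2) n b)
    (strictAntiOn_angleSum hA n.cast_nonneg b.cast_nonneg) continuous_angleSum.continuousOn
    tendsto_angleSum_atTop two_pi_pos ?_
  rw [angleSum_zero]
  nlinarith [pi_pos]
end

section
/- Let 0 < b₁ ≤ b₂ ≤ b₃ be real numbers and define f(x) = 6·Real.arcsin(1/(2·Real.cosh(x/2))) + 2·∑_{i=1}^{2} Real.arcsin(Real.cosh(b_i/2)/Real.cosh(x/2)). If f(b₃) ≤ π, then b₂ < b₃. -/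
/-- For `0 < b₁ ≤ b₂ ≤ b₃`: if `f(b₃) ≤ π` then `b₂ < b₃`, where
`f(x) = 6·arcsin(1/(2cosh(x/2))) + 2·arcsin(cosh(b₁/2)/cosh(x/2)) + 2·arcsin(cosh(b₂/2)/cosh(x/2))`. -/
theorem stmt_6 (b₁ b₂ b₃ : ℝ) (hb₁ : 0 < b₁) (h12 : b₁ ≤ b₂) (h23 : b₂ ≤ b₃)
    (f : ℝ → ℝ)
    (hf : ∀ x, f x = 6 * Real.arcsin (1 / (2 * Real.cosh (x / 2)))
      + 2 * (Real.arcsin (Real.cosh (b₁ / 2) / Real.cosh (x / 2))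
        + Real.arcsin (Real.cosh (b₂ / 2) / Real.cosh (x / 2))))
    (h : f b₃ ≤ Real.pi) :
    b₂ < b₃ := by
  by_contra hlt
  push_neg at hlt
  have heq : b₂ = b₃ := le_antisymm h23 hlt
  have hc : 0 < Real.cosh (b₃ / 2) := Real.cosh_pos _
  have h1 : 0 < Real.arcsin (1 / (2 * Real.cosh (b₃ / 2))) := by
    apply Real.arcsin_pos.2
    positivity
  have h2 : 0 < Real.arcsin (Real.cosh (b₁ / 2) / Real.cosh (b₃ / 2)) := by
    apply Real.arcsin_pos.2
    positivity
  have h3 : Real.arcsin (Real.cosh (b₂ / 2) / Real.cosh (b₃ / 2)) = Real.pi / 2 := by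
    rw [heq, div_self hc.ne', Real.arcsin_one]
  have := hf b₃
  rw [h3] at this
  nlinarith [this, h, Real.pi_pos]
end

section
/- Let 0 < b₁ ≤ b₂ ≤ b₃ be real numbers and define f(x) = 6·Real.arcsin(1/(2·Real.cosh(x/2))) + 2·∑_{i=1}^{2} Real.arcsin(Real.cosh(b_i/2)/Real.cosh(x/2)) and g(x) = 2·Real.arccos(Real.tanh(b₃/2)/Real.tanh x) + 2·Real.arcsin(Real.sinh(b₃/2)/Real.sinh x) + 2·∑_{i=1}^{2} Real.arcsin(Real.cosh(b_i/2)/Real.cosh(x/2)). If f(b₃) ≤ π, then there exists a unique x ∈ (b₂, b₃] with g(x) = π. -/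
/-!
Write `g x = T x + 2 * (m₁ x + m₂ x)`, where `T x` is the angle sum of the hyperbolic isosceles
triangle with base `b₃` and legs `x`, and `mᵢ x` is half the angle of the monogon around the
hole of length `bᵢ`. Each `mᵢ` strictly decreases for `x ≥ bᵢ`. Half of `T x` lies in `[0, π]`
and its cosine `tanh (b₃/2) * √(cosh x ^ 2 - cosh (b₃/2) ^ 2) / (cosh x + 1)` increases with `x`,
so `T` decreases. Hence `g` strictly decreases on `[b₂, b₃]`. At `x = b₂` the monogon around `b₂`
is degenerate (`m₂ = π/2`), so `g b₂ > π`; at `x = b₃` the triangle is equilateral and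
`g b₃ = f b₃ ≤ π`. The intermediate value theorem gives the root.
-/

open Real Set

theorem StrictAntiOn.existsUnique_mem_Ioc_eq {α δ : Type*} [ConditionallyCompleteLinearOrder α]
    [TopologicalSpace α] [OrderTopology α] [DenselyOrdered α] [LinearOrder δ]
    [TopologicalSpace δ] [OrderClosedTopology δ] {f : α → δ} {a b : α} {y : δ} (hab : a ≤ b)
    (hf : StrictAntiOn f (Icc a b)) (hcont : ContinuousOn f (Icc a b)) (hy : y ∈ Ico (f b) (f a)) :
    ∃! x, x ∈ Ioc a b ∧ f x = y := by
  obtain ⟨x, hx, rfl⟩ := intermediate_value_Ioc' hab hcont hy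
  exact ⟨x, ⟨hx, rfl⟩, fun z ⟨hz, hfz⟩ =>
    hf.injOn (Ioc_subset_Icc_self hz) (Ioc_subset_Icc_self hx) hfz⟩

namespace Real

theorem strictMono_tanh : StrictMono tanh := fun x y hxy => by
  have mem : ∀ z, tanh z ∈ Ioo (-1) 1 := fun z => ⟨neg_one_lt_tanh z, tanh_lt_one z⟩
  rwa [← strictMonoOn_artanh.lt_iff_lt (mem x) (mem y), artanh_tanh, artanh_tanh]

theorem tanh_pos {x : ℝ} (hx : 0 < x) : 0 < tanh x := by
  simpa using strictMono_tanh hx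

theorem tanh_nonneg {x : ℝ} (hx : 0 ≤ x) : 0 ≤ tanh x := by
  simpa using strictMono_tanh.monotone hx

theorem continuous_tanh : Continuous tanh := by
  rw [show tanh = fun x => sinh x / cosh x from funext tanh_eq_sinh_div_cosh]
  exact continuous_sinh.div continuous_cosh fun x => (cosh_pos x).ne'

end Real

theorem strictMonoOn_sqrt_sq_sub_sq_div_add_one {k : ℝ} (hk : 0 ≤ k) :
    StrictMonoOn (fun u => √(u ^ 2 - k ^ 2) / (u + 1)) (Ici k) := by
  intro u hu v hv huv
  simp only [mem_Ici] at hu hv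
  have hu0 : 0 ≤ u := hk.trans hu
  rw [div_lt_div_iff₀ (by linarith) (by linarith)]
  have hsq : (√(u ^ 2 - k ^ 2) * (v + 1)) ^ 2 < (√(v ^ 2 - k ^ 2) * (u + 1)) ^ 2 := by
    rw [mul_pow, mul_pow, sq_sqrt (by nlinarith), sq_sqrt (by nlinarith)]
    -- the difference factors as `(v - u) * (2uv + u + v + k²(u + v + 2))`
    nlinarith [mul_pos (sub_pos.2 huv)
      (show 0 < 2 * u * v + u + v + k ^ 2 * (u + v + 2) by nlinarith [sq_nonneg k])]
  exact lt_of_pow_lt_pow_left₀ 2 (by positivity) hsq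

theorem cos_arccos_tanh_div_add_arcsin_sinh_div {c x : ℝ} (hc : 0 < c) (hcx : c ≤ x) :
    cos (arccos (tanh c / tanh x) + arcsin (sinh c / sinh x))
      = tanh c * (√(cosh x ^ 2 - cosh c ^ 2) / (cosh x + 1)) := by
  have hx : 0 < x := hc.trans_le hcx
  have hsx : 0 < sinh x := sinh_pos_iff.2 hx
  have hsc : 0 < sinh c := sinh_pos_iff.2 hc
  have hcosh : cosh c ≤ cosh x := by
    rwa [cosh_le_cosh, abs_of_pos hc, abs_of_pos hx]
  set S := cosh x ^ 2 - cosh c ^ 2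
  have hS0 : 0 ≤ S := by nlinarith [cosh_pos c]
  have hA := cosh_sq c
  have hC := cosh_sq x
  have hb : sinh c / sinh x ∈ Icc (-1) 1 :=
    ⟨by linarith [div_pos hsc hsx], (div_le_one hsx).2 (sinh_le_sinh.2 hcx)⟩
  have ha : tanh c / tanh x ∈ Icc (-1) 1 :=
    ⟨by linarith [div_pos (tanh_pos hc) (tanh_pos hx)],
      (div_le_one (tanh_pos hx)).2 (strictMono_tanh.monotone hcx)⟩
  have sqrt_b : √(1 - (sinh c / sinh x) ^ 2) = √S / sinh x := by
    have : 1 - (sinh c / sinh x) ^ 2 = S / sinh x ^ 2 := by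
      field_simp
      linear_combination hA - hC
    rw [this, sqrt_div hS0, sqrt_sq hsx.le]
  have sqrt_a : √(1 - (tanh c / tanh x) ^ 2) = √S / (cosh c * sinh x) := by
    have : 1 - (tanh c / tanh x) ^ 2 = S / (cosh c * sinh x) ^ 2 := by
      rw [tanh_eq_sinh_div_cosh, tanh_eq_sinh_div_cosh]
      field_simp
      linear_combination (sinh x ^ 2 + 1) * hA - (sinh c ^ 2 + 1) * hC
    rw [this, sqrt_div hS0, sqrt_sq (by positivity)]
  rw [cos_add, cos_arccos ha.1 ha.2, cos_arcsin, sin_arccos, sin_arcsin hb.1 hb.2, sqrt_a, sqrt_b,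
    tanh_eq_sinh_div_cosh, tanh_eq_sinh_div_cosh]
  have hx1 : 0 < cosh x - 1 := by linarith [one_lt_cosh.2 hx.ne']
  field_simp
  linear_combination √S * hC

theorem arccos_tanh_div_add_arcsin_sinh_div_mem_Icc {c x : ℝ} (hc : 0 ≤ c) (hx : 0 < x) :
    arccos (tanh c / tanh x) + arcsin (sinh c / sinh x) ∈ Icc 0 π := by
  have hsinh : 0 ≤ sinh c / sinh x := div_nonneg (sinh_nonneg_iff.2 hc) (sinh_pos_iff.2 hx).le
  constructor
  · linarith [arccos_nonneg (tanh c / tanh x), arcsin_nonneg.2 hsinh]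
  · linarith [arccos_le_pi_div_two.2 (div_nonneg (tanh_nonneg hc) (tanh_pos hx).le),
      arcsin_le_pi_div_two (sinh c / sinh x)]

/-- The angle sum of the hyperbolic isosceles triangle with legs `x` and base `2 * c`: its base
angles are `arccos (tanh c / tanh x)` and its apex angle is `2 * arcsin (sinh c / sinh x)`.
For `x ≤ c` there is no such triangle and the formula gives `π`. -/
noncomputable def isoscelesAngleSum (c x : ℝ) : ℝ :=
  2 * arccos (tanh c / tanh x) + 2 * arcsin (sinh c / sinh x)

theorem isoscelesAngleSum_of_le {c x : ℝ} (hx : 0 < x) (hxc : x ≤ c) :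
    isoscelesAngleSum c x = π := by
  have htanh : 1 ≤ tanh c / tanh x := (one_le_div (tanh_pos hx)).2 (strictMono_tanh.monotone hxc)
  have hsinh : 1 ≤ sinh c / sinh x := (one_le_div (sinh_pos_iff.2 hx)).2 (sinh_le_sinh.2 hxc)
  rw [isoscelesAngleSum, arccos_eq_zero.2 htanh, arcsin_of_one_le hsinh]
  ring

theorem isoscelesAngleSum_nonneg {c x : ℝ} (hc : 0 ≤ c) (hx : 0 < x) :
    0 ≤ isoscelesAngleSum c x := by
  have := (arccos_tanh_div_add_arcsin_sinh_div_mem_Icc hc hx).1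
  rw [isoscelesAngleSum]
  linarith

theorem strictAntiOn_isoscelesAngleSum {c : ℝ} (hc : 0 < c) :
    StrictAntiOn (isoscelesAngleSum c) (Ici c) := by
  intro x hx y hy hxy
  have hx0 : 0 < x := hc.trans_le hx
  have hcx : cosh c ≤ cosh x := cosh_le_cosh.2 (by rwa [abs_of_pos hc, abs_of_pos hx0])
  have hxy_cosh : cosh x < cosh y := cosh_strictMonoOn hx0.le (hx0.le.trans hxy.le) hxy
  have hcos : cos (arccos (tanh c / tanh x) + arcsin (sinh c / sinh x))
      < cos (arccos (tanh c / tanh y) + arcsin (sinh c / sinh y)) := by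
    rw [cos_arccos_tanh_div_add_arcsin_sinh_div hc hx, cos_arccos_tanh_div_add_arcsin_sinh_div hc hy]
    exact mul_lt_mul_of_pos_left (strictMonoOn_sqrt_sq_sub_sq_div_add_one (cosh_pos c).le
      hcx (hcx.trans hxy_cosh.le) hxy_cosh) (tanh_pos hc)
  rw [strictAntiOn_cos.lt_iff_gt (arccos_tanh_div_add_arcsin_sinh_div_mem_Icc hc.le hx0)
    (arccos_tanh_div_add_arcsin_sinh_div_mem_Icc hc.le (hx0.trans hxy))] at hcos
  simp only [isoscelesAngleSum]
  linarith

theorem isoscelesAngleSum_max {c x : ℝ} (hx : 0 < x) :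
    isoscelesAngleSum c (max x c) = isoscelesAngleSum c x := by
  rcases le_total x c with hxc | hcx
  · rw [max_eq_right hxc, isoscelesAngleSum_of_le hx hxc,
      isoscelesAngleSum_of_le (hx.trans_le hxc) le_rfl]
  · rw [max_eq_left hcx]

theorem antitoneOn_isoscelesAngleSum {c : ℝ} (hc : 0 < c) :
    AntitoneOn (isoscelesAngleSum c) (Ioi 0) := by
  intro x hx y hy hxy
  rw [← isoscelesAngleSum_max hx, ← isoscelesAngleSum_max hy]
  exact (strictAntiOn_isoscelesAngleSum hc).antitoneOn (le_max_right x c) (le_max_right y c)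
    (max_le_max_right c hxy)

/-- The triangle with legs `2 * c` and base `2 * c` is equilateral, with all three angles equal to
`2 * arcsin (1 / (2 * cosh c))`. -/
theorem isoscelesAngleSum_two_mul {c : ℝ} (hc : 0 < c) :
    isoscelesAngleSum c (2 * c) = 6 * arcsin (1 / (2 * cosh c)) := by
  set s := 1 / (2 * cosh c) with hs
  have hs0 : 0 < s := by positivity
  have hs1 : s ≤ 1 / 2 := by
    rw [hs, one_div_le_one_div (by positivity) two_pos]
    linarith [one_le_cosh c]
  have hsinh : sinh c / sinh (2 * c) = s := by
    have := (sinh_pos_iff.2 hc).ne'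
    rw [sinh_two_mul, hs]
    field_simp
  have htanh : tanh c / tanh (2 * c) = cos (2 * arcsin s) := by
    rw [cos_two_mul, cos_arcsin, sq_sqrt (by nlinarith), tanh_eq_sinh_div_cosh,
      tanh_eq_sinh_div_cosh, sinh_two_mul, cosh_two_mul, hs]
    have := (sinh_pos_iff.2 hc).ne'
    field_simp
    linear_combination -cosh_sq c
  have hθ : 2 * arcsin s ∈ Icc 0 π := by
    constructor <;> linarith [arcsin_nonneg.2 hs0.le, arcsin_le_pi_div_two s]
  rw [isoscelesAngleSum, htanh, arccos_cos hθ.1 hθ.2, hsinh]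
  ring

theorem continuousOn_isoscelesAngleSum (c : ℝ) : ContinuousOn (isoscelesAngleSum c) (Ioi 0) := by
  have htanh : ContinuousOn (fun x => tanh c / tanh x) (Ioi 0) :=
    continuousOn_const.div continuous_tanh.continuousOn fun x hx => (tanh_pos hx).ne'
  have hsinh : ContinuousOn (fun x => sinh c / sinh x) (Ioi 0) :=
    continuousOn_const.div continuous_sinh.continuousOn fun x hx => (sinh_pos_iff.2 hx).ne'
  exact (continuousOn_const.mul (continuous_arccos.comp_continuousOn htanh)).add
    (continuousOn_const.mul (continuous_arcsin.comp_continuousOn hsinh))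

/-- Half the angle at the base point of the one-holed monogon with boundary length `b` and side
length `x`. -/
noncomputable def monogonHalfAngle (b x : ℝ) : ℝ :=
  arcsin (cosh (b / 2) / cosh (x / 2))

theorem monogonHalfAngle_self (b : ℝ) : monogonHalfAngle b b = π / 2 := by
  rw [monogonHalfAngle, div_self (cosh_pos _).ne', arcsin_one]

theorem monogonHalfAngle_pos (b x : ℝ) : 0 < monogonHalfAngle b x :=
  arcsin_pos.2 (div_pos (cosh_pos _) (cosh_pos _))

theorem strictAntiOn_monogonHalfAngle {b : ℝ} (hb : 0 ≤ b) :
    StrictAntiOn (monogonHalfAngle b) (Ici b) := by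
  intro x (hx : b ≤ x) y _ hxy
  have hbx : cosh (b / 2) ≤ cosh (x / 2) := cosh_strictMonoOn.monotoneOn
    (mem_Ici.2 (by linarith)) (mem_Ici.2 (by linarith)) (by linarith)
  have hcosh : cosh (x / 2) < cosh (y / 2) :=
    cosh_strictMonoOn (mem_Ici.2 (by linarith)) (mem_Ici.2 (by linarith)) (by linarith)
  apply strictMonoOn_arcsin
  · exact ⟨by linarith [div_pos (cosh_pos (b / 2)) (cosh_pos (y / 2))],
      (div_le_one (cosh_pos _)).2 (hbx.trans hcosh.le)⟩
  · exact ⟨by linarith [div_pos (cosh_pos (b / 2)) (cosh_pos (x / 2))],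
      (div_le_one (cosh_pos _)).2 hbx⟩
  · exact div_lt_div_of_pos_left (cosh_pos _) (cosh_pos _) hcosh

theorem continuous_monogonHalfAngle (b : ℝ) : Continuous (monogonHalfAngle b) :=
  continuous_arcsin.comp (continuous_const.div (continuous_cosh.comp (continuous_id.div_const 2))
    fun _ => (cosh_pos _).ne')

/-- Theorem maximal sysloops, part (b): if `0 < b₁ ≤ b₂ ≤ b₃` and `f(b₃) ≤ π`, then
there is a unique `x ∈ (b₂, b₃]` with `g(x) = π`, where
`g(x) = 2·arccos(tanh(b₃/2)/tanh x) + 2·arcsin(sinh(b₃/2)/sinh x)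
      + 2·arcsin(cosh(b₁/2)/cosh(x/2)) + 2·arcsin(cosh(b₂/2)/cosh(x/2))`. -/
theorem stmt_7 (b₁ b₂ b₃ : ℝ) (hb₁ : 0 < b₁) (h12 : b₁ ≤ b₂) (h23 : b₂ ≤ b₃)
    (f g : ℝ → ℝ)
    (hf : ∀ x, f x = 6 * Real.arcsin (1 / (2 * Real.cosh (x / 2)))
      + 2 * (Real.arcsin (Real.cosh (b₁ / 2) / Real.cosh (x / 2))
        + Real.arcsin (Real.cosh (b₂ / 2) / Real.cosh (x / 2))))
    (hg : ∀ x, g x = 2 * Real.arccos (Real.tanh (b₃ / 2) / Real.tanh x)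
      + 2 * Real.arcsin (Real.sinh (b₃ / 2) / Real.sinh x)
      + 2 * (Real.arcsin (Real.cosh (b₁ / 2) / Real.cosh (x / 2))
        + Real.arcsin (Real.cosh (b₂ / 2) / Real.cosh (x / 2))))
    (h : f b₃ ≤ Real.pi) :
    ∃! x : ℝ, x ∈ Set.Ioc b₂ b₃ ∧ g x = Real.pi := by
  have hb₂ : 0 < b₂ := hb₁.trans_le h12
  have hb₃ : 0 < b₃ := hb₂.trans_le h23
  have hg' : ∀ x, g x = isoscelesAngleSum (b₃ / 2) x
      + 2 * (monogonHalfAngle b₁ x + monogonHalfAngle b₂ x) := hg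
  have hanti : StrictAntiOn g (Icc b₂ b₃) := by
    intro x hx y hy hxy
    have hT := antitoneOn_isoscelesAngleSum (half_pos hb₃) (hb₂.trans_le hx.1)
      (hb₂.trans_le hy.1) hxy.le
    have hM₁ := strictAntiOn_monogonHalfAngle hb₁.le (h12.trans hx.1) (h12.trans hy.1) hxy
    have hM₂ := strictAntiOn_monogonHalfAngle hb₂.le hx.1 hy.1 hxy
    rw [hg', hg']
    linarith
  have hcont : ContinuousOn g (Icc b₂ b₃) := by
    rw [funext hg']
    exact ((continuousOn_isoscelesAngleSum _).mono fun x hx => hb₂.trans_le hx.1).add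
      (continuousOn_const.mul ((continuous_monogonHalfAngle b₁).add
        (continuous_monogonHalfAngle b₂)).continuousOn)
  have hgb₃ : g b₃ = f b₃ := by
    have := isoscelesAngleSum_two_mul (half_pos hb₃)
    rw [mul_div_cancel₀ b₃ two_ne_zero] at this
    rw [hg', hf, this]
    rfl
  have hgb₂ : π < g b₂ := by
    rw [hg', monogonHalfAngle_self]
    linarith [isoscelesAngleSum_nonneg (half_pos hb₃).le hb₂, monogonHalfAngle_pos b₁ b₂]
  exact hanti.existsUnique_mem_Ioc_eq h23 hcont ⟨hgb₃ ▸ h, hgb₂⟩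
end

section
/- For every real c > 0, the function x ↦ 2·Real.arccos(Real.tanh c / Real.tanh x) + 2·Real.arcsin(Real.sinh c / Real.sinh x) is strictly decreasing on [c, ∞). -/
/-! With `D = sinh² x - sinh² c`, the arccos term has derivative `2 sinh c / (sinh x √D)` and the
arcsin term `-2 sinh c cosh x / (sinh x √D)`, so the derivative is
`2 sinh c (1 - cosh x) / (sinh x √D) < 0` for `x > c`. At `x = c` both arguments equal `1` and
the derivative blows up, but continuity there suffices. -/

open Real Set

namespace Real

lemma tanh_div_tanh (a x : ℝ) : tanh a / tanh x = tanh a * cosh x / sinh x := by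
  rw [tanh_eq_sinh_div_cosh x, div_div_eq_mul_div]

lemma sinh_sq_lt_sinh_sq {a x : ℝ} (h : |a| < x) : sinh a ^ 2 < sinh x ^ 2 := by
  rw [sq_lt_sq, abs_sinh, abs_sinh, abs_of_pos ((abs_nonneg a).trans_lt h)]
  exact sinh_lt_sinh.2 h

lemma one_sub_sq_sinh_div_sinh (a : ℝ) {x : ℝ} (hx : x ≠ 0) :
    1 - (sinh a / sinh x) ^ 2 = (sinh x ^ 2 - sinh a ^ 2) / sinh x ^ 2 := by
  have : sinh x ≠ 0 := sinh_ne_zero.2 hx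
  field_simp

lemma one_sub_sq_tanh_div_tanh (a : ℝ) {x : ℝ} (hx : x ≠ 0) :
    1 - (tanh a / tanh x) ^ 2 = (sinh x ^ 2 - sinh a ^ 2) / (sinh x * cosh a) ^ 2 := by
  have : sinh x ≠ 0 := sinh_ne_zero.2 hx
  have : cosh a ≠ 0 := (cosh_pos a).ne'
  rw [tanh_div_tanh, tanh_eq_sinh_div_cosh]
  field_simp
  linear_combination sinh x ^ 2 * cosh_sq a - sinh a ^ 2 * cosh_sq x

lemma ne_neg_one_and_ne_one_of_sq_lt_one {u : ℝ} (h : u ^ 2 < 1) : u ≠ -1 ∧ u ≠ 1 := by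
  obtain ⟨h₁, h₂⟩ := abs_lt.1 ((sq_lt_one_iff_abs_lt_one u).1 h)
  exact ⟨h₁.ne', h₂.ne⟩

lemma hasDerivAt_arcsin_sinh_div_sinh {a x : ℝ} (h : |a| < x) :
    HasDerivAt (fun y => arcsin (sinh a / sinh y))
      (-(sinh a * cosh x) / (sinh x * √(sinh x ^ 2 - sinh a ^ 2))) x := by
  have hx : 0 < x := (abs_nonneg a).trans_lt h
  have hs : 0 < sinh x := sinh_pos_iff.2 hx
  have hD : 0 < sinh x ^ 2 - sinh a ^ 2 := sub_pos.2 (sinh_sq_lt_sinh_sq h)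
  have hu := one_sub_sq_sinh_div_sinh a hx.ne'
  have hinner : HasDerivAt (fun y => sinh a / sinh y) (-(sinh a * cosh x) / sinh x ^ 2) x := by
    refine ((hasDerivAt_const x (sinh a)).div (hasDerivAt_sinh x) hs.ne').congr_deriv ?_
    ring
  obtain ⟨h₁, h₂⟩ := ne_neg_one_and_ne_one_of_sq_lt_one (by rw [← sub_pos, hu]; positivity)
  refine ((hasDerivAt_arcsin h₁ h₂).comp x hinner).congr_deriv ?_
  rw [hu, sqrt_div' _ (sq_nonneg _), sqrt_sq hs.le]
  field_simp

lemma hasDerivAt_arccos_tanh_div_tanh {a x : ℝ} (h : |a| < x) :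
    HasDerivAt (fun y => arccos (tanh a / tanh y))
      (sinh a / (sinh x * √(sinh x ^ 2 - sinh a ^ 2))) x := by
  have hx : 0 < x := (abs_nonneg a).trans_lt h
  have hs : 0 < sinh x := sinh_pos_iff.2 hx
  have hD : 0 < sinh x ^ 2 - sinh a ^ 2 := sub_pos.2 (sinh_sq_lt_sinh_sq h)
  have hu := one_sub_sq_tanh_div_tanh a hx.ne'
  have hinner : HasDerivAt (fun y => tanh a / tanh y) (-tanh a / sinh x ^ 2) x := by
    simp_rw [tanh_div_tanh]
    refine (((hasDerivAt_cosh x).const_mul (tanh a)).div (hasDerivAt_sinh x) hs.ne').congr_deriv ?_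
    field_simp
    linear_combination -tanh a * cosh_sq x
  obtain ⟨h₁, h₂⟩ := ne_neg_one_and_ne_one_of_sq_lt_one (by rw [← sub_pos, hu]; positivity)
  refine ((hasDerivAt_arccos h₁ h₂).comp x hinner).congr_deriv ?_
  rw [hu, sqrt_div' _ (sq_nonneg _), sqrt_sq (by positivity), tanh_eq_sinh_div_cosh]
  field_simp

end Real

/-- For every `c > 0`, the function
`x ↦ 2·arccos(tanh c / tanh x) + 2·arcsin(sinh c / sinh x)`
(the angle sum `ψ + 2θ` of an isosceles hyperbolic triangle with legs `x` and
base `2c`) is strictly decreasing on `[c, ∞)`. -/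
theorem stmt_8 (c : ℝ) (hc : 0 < c) :
    StrictAntiOn
      (fun x : ℝ => 2 * Real.arccos (Real.tanh c / Real.tanh x)
        + 2 * Real.arcsin (Real.sinh c / Real.sinh x))
      (Set.Ici c) := by
  refine strictAntiOn_of_deriv_neg (convex_Ici c) ?_ fun x hx => ?_
  · have hsinh : ∀ x ∈ Ici c, sinh x ≠ 0 := fun x hx => (sinh_pos_iff.2 (hc.trans_le hx)).ne'
    simp_rw [tanh_div_tanh]
    fun_prop (disch := assumption)
  · rw [interior_Ici] at hx
    have h : |c| < x := by rwa [abs_of_pos hc]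
    have hB : 0 < sinh x * √(sinh x ^ 2 - sinh c ^ 2) :=
      mul_pos (sinh_pos_iff.2 (hc.trans hx)) (sqrt_pos.2 (sub_pos.2 (sinh_sq_lt_sinh_sq h)))
    have hcosh : 1 < cosh x := one_lt_cosh.2 (hc.trans hx).ne'
    have hf : HasDerivAt (fun y => 2 * arccos (tanh c / tanh y) + 2 * arcsin (sinh c / sinh y))
        _ x :=
      ((hasDerivAt_arccos_tanh_div_tanh h).const_mul 2).add
        ((hasDerivAt_arcsin_sinh_div_sinh h).const_mul 2)
    rw [hf.deriv]
    calc _ = 2 * sinh c * (1 - cosh x) / (sinh x * √(sinh x ^ 2 - sinh c ^ 2)) := by ring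
      _ < 0 := div_neg_of_neg_of_pos
          (mul_neg_of_pos_of_neg (mul_pos two_pos (sinh_pos_iff.2 hc)) (by linarith)) hB
end
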